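/- arXiv:1303.3992 — 2 statements merged into one kernel-verified Lean document; each statement's English description precedes it below -/
import Mathlib

section
/- Let μ be a Borel probability measure on ℝ and suppose that for μ-almost every x, liminf_{r→0} log μ(B(x,r))/log r ≥ 1. Then for every ε > 0 there exists a Borel set A with μ(A) > 1 − ε and a constant C > 0 such that the normalized restriction μ_ε = μ|_A / μ(A) satisfies μ_ε(B(x,r)) ≤ C r^{1−ε} for all x ∈ A and all r ∈ (0,1]; in particular the correlation dimension of μ_ε is at least 1 − ε. -/
/-!
If `s < locDim μ x`, then `μ (closedBall x r) ≤ r ^ s` for small `r`, hence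
`μ (closedBall x r) ≤ n r ^ s` for all `r ∈ (0, 1]` and some `n`. The sets of points with a given
constant `n` increase to a set of full measure, so one of them, `A`, has measure `> 1 - ε`;
conditioning on `A` multiplies the mass of balls by at most `(μ A)⁻¹`. For the energy, split the
kernel `|x - y| ^ (-t)` over the dyadic balls around `x`: the `k`-th one contributes at most
`C 2 ^ ((k + 1) t) 2 ^ (-k s)`, a geometric series when `t < s`.
-/

open MeasureTheory Metric Filter
open scoped ENNReal Real Topology

/-- Lower local dimension of a measure at a point. -/
noncomputable def locDim (μ : Measure ℝ) (x : ℝ) : ℝ :=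
  Filter.liminf (fun r : ℝ => Real.log (μ (closedBall x r)).toReal / Real.log r)
    (𝓝[>] (0 : ℝ))

noncomputable def energyM (μ : Measure ℝ) (t : ℝ) : ℝ≥0∞ :=
  ∫⁻ x, ∫⁻ y, (edist x y) ^ (-t) ∂μ ∂μ

open Set

lemma le_ofReal_two_rpow_mul_of_forall_rat {f : ℝ → ℝ≥0∞} (hf : Monotone f) {C s : ℝ}
    (hC : 0 ≤ C) (hs : 0 ≤ s)
    (h : ∀ q : ℚ, (q : ℝ) ∈ Ioc 0 1 → f q ≤ ENNReal.ofReal (C * (q : ℝ) ^ s))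
    {r : ℝ} (hr : r ∈ Ioc 0 1) :
    f r ≤ ENNReal.ofReal (2 ^ s * C * r ^ s) := by
  obtain ⟨q, hrq, hq2r, hq1⟩ : ∃ q : ℚ, r ≤ q ∧ (q : ℝ) ≤ 2 * r ∧ (q : ℝ) ≤ 1 := by
    rcases hr.2.lt_or_eq with hr1 | rfl
    · obtain ⟨q, hrq, hq⟩ := exists_rat_btwn (lt_min (by linarith [hr.1]) hr1 : r < min (2 * r) 1)
      exact ⟨q, hrq.le, hq.le.trans (min_le_left _ _), hq.le.trans (min_le_right _ _)⟩
    · exact ⟨1, by simp, by norm_num, by simp⟩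
  have hq0 : (0 : ℝ) < q := hr.1.trans_le hrq
  calc f r ≤ f q := hf hrq
    _ ≤ ENNReal.ofReal (C * (q : ℝ) ^ s) := h q ⟨hq0, hq1⟩
    _ ≤ ENNReal.ofReal (C * (2 * r) ^ s) := by gcongr
    _ = ENNReal.ofReal (2 ^ s * C * r ^ s) := by
        rw [Real.mul_rpow zero_le_two hr.1.le]
        ring_nf

lemma eventually_lt_measure_of_ae_exists_mem {α : Type*} [MeasurableSpace α]
    {μ : Measure α} {F : ℕ → Set α} (hF : Monotone F) (h : ∀ᵐ x ∂μ, ∃ n, x ∈ F n)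
    {c : ℝ≥0∞} (hc : c < μ univ) : ∀ᶠ n in atTop, c < μ (F n) := by
  have hfull : μ (⋃ n, F n) = μ univ :=
    measure_congr (ae_eq_univ.2 (measure_eq_zero_iff_ae_notMem.2 (by simpa using h)))
  exact (tendsto_measure_iUnion_atTop hF).eventually_const_lt (hfull ▸ hc)

lemma eventually_measure_closedBall_le_rpow (μ : Measure ℝ) [IsProbabilityMeasure μ] {x s : ℝ}
    (hs : s < locDim μ x) : ∀ᶠ r in 𝓝[>] 0, μ (closedBall x r) ≤ ENNReal.ofReal (r ^ s) := by
  have hunit : ∀ᶠ r in 𝓝[>] (0 : ℝ), r ∈ Ioo 0 1 := Ioo_mem_nhdsGT one_pos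
  have hbdd : IsBoundedUnder (· ≥ ·) (𝓝[>] (0 : ℝ))
      fun r => Real.log (μ (closedBall x r)).toReal / Real.log r := by
    refine isBoundedUnder_of_eventually_ge (a := 0) (hunit.mono fun r hr => ?_)
    refine div_nonneg_of_nonpos (Real.log_nonpos ENNReal.toReal_nonneg ?_)
      (Real.log_neg hr.1 hr.2).le
    exact ENNReal.toReal_le_of_le_ofReal zero_le_one (by simpa using prob_le_one)
  filter_upwards [eventually_lt_of_lt_liminf hs hbdd, hunit] with r hr hr01
  rw [← ENNReal.ofReal_toReal (measure_ne_top μ _)]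
  refine ENNReal.ofReal_le_ofReal ?_
  rcases ENNReal.toReal_nonneg.eq_or_lt with h0 | hpos
  · rw [← h0]
    exact Real.rpow_nonneg hr01.1.le s
  · refine (Real.log_le_log_iff hpos (Real.rpow_pos_of_pos hr01.1 s)).1 ?_
    rw [Real.log_rpow hr01.1]
    exact ((lt_div_iff_of_neg (Real.log_neg hr01.1 hr01.2)).1 hr).le

lemma exists_measure_closedBall_le_mul_rpow (μ : Measure ℝ) [IsProbabilityMeasure μ] {x s : ℝ}
    (hs0 : 0 ≤ s) (hs : s < locDim μ x) :
    ∃ C : ℝ, ∀ r ∈ Ioc (0 : ℝ) 1, μ (closedBall x r) ≤ ENNReal.ofReal (C * r ^ s) := by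
  obtain ⟨δ, hδ, hsmall⟩ := mem_nhdsGT_iff_exists_Ioo_subset.1
    (eventually_measure_closedBall_le_rpow μ hs)
  refine ⟨max 1 (δ ^ s)⁻¹, fun r hr => ?_⟩
  rcases lt_or_ge r δ with hrδ | hδr
  · calc μ (closedBall x r) ≤ ENNReal.ofReal (r ^ s) := hsmall ⟨hr.1, hrδ⟩
      _ ≤ ENNReal.ofReal (max 1 (δ ^ s)⁻¹ * r ^ s) := by
          gcongr
          exact le_mul_of_one_le_left (Real.rpow_nonneg hr.1.le s) (le_max_left _ _)
  · have hδs : 0 < δ ^ s := Real.rpow_pos_of_pos hδ s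
    calc μ (closedBall x r) ≤ ENNReal.ofReal ((δ ^ s)⁻¹ * δ ^ s) := by
          rw [inv_mul_cancel₀ hδs.ne', ENNReal.ofReal_one]
          exact prob_le_one
      _ ≤ ENNReal.ofReal (max 1 (δ ^ s)⁻¹ * r ^ s) := by
          gcongr
          · exact le_max_right _ _
          · exact hδ.le

section BallGrowth

variable {X : Type*} [PseudoMetricSpace X] [MeasurableSpace X]

lemma measurable_measure_closedBall [OpensMeasurableSpace X] [SecondCountableTopology X]
    (μ : Measure X) [SFinite μ] (r : ℝ) : Measurable fun x => μ (closedBall x r) := by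
  have hs : MeasurableSet {p : X × X | dist p.2 p.1 ≤ r} :=
    measurableSet_le (by fun_prop) measurable_const
  exact measurable_measure_prodMk_left hs

/-- Only rational radii are tested, so that the set is measurable. -/
def ballGrowthSet (μ : Measure X) (s : ℝ) (n : ℕ) : Set X :=
  {x | ∀ q : ℚ, (q : ℝ) ∈ Ioc 0 1 → μ (closedBall x q) ≤ ENNReal.ofReal (n * (q : ℝ) ^ s)}

lemma measurableSet_ballGrowthSet [OpensMeasurableSpace X] [SecondCountableTopology X]
    (μ : Measure X) [SFinite μ] (s : ℝ) (n : ℕ) : MeasurableSet (ballGrowthSet μ s n) := by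
  simp only [ballGrowthSet, ofPred_forall]
  exact .iInter fun q => .iInter fun _ =>
    measurableSet_le (measurable_measure_closedBall μ q) measurable_const

lemma ballGrowthSet_mono (μ : Measure X) (s : ℝ) : Monotone (ballGrowthSet μ s) :=
  fun _ _ hnm _ hx q hq => (hx q hq).trans <| by
    gcongr
    exact Real.rpow_nonneg hq.1.le s

lemma measure_closedBall_le_of_mem_ballGrowthSet {μ : Measure X} {s : ℝ} {n : ℕ} {x : X}
    (hs : 0 ≤ s) (hx : x ∈ ballGrowthSet μ s n) {r : ℝ} (hr : r ∈ Ioc 0 1) :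
    μ (closedBall x r) ≤ ENNReal.ofReal (2 ^ s * n * r ^ s) :=
  le_ofReal_two_rpow_mul_of_forall_rat (fun _ _ h => measure_mono (closedBall_subset_closedBall h))
    n.cast_nonneg hs hx hr

end BallGrowth

lemma ae_exists_mem_ballGrowthSet (μ : Measure ℝ) [IsProbabilityMeasure μ] {s : ℝ} (hs0 : 0 ≤ s)
    (hloc : ∀ᵐ x ∂μ, s < locDim μ x) : ∀ᵐ x ∂μ, ∃ n, x ∈ ballGrowthSet μ s n := by
  filter_upwards [hloc] with x hx
  obtain ⟨C, hC⟩ := exists_measure_closedBall_le_mul_rpow μ hs0 hx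
  obtain ⟨n, hn⟩ := exists_nat_ge C
  exact ⟨n, fun q hq => (hC q hq).trans
    (ENNReal.ofReal_le_ofReal (mul_le_mul_of_nonneg_right hn (Real.rpow_nonneg hq.1.le s)))⟩

open ProbabilityTheory in
theorem exists_measurableSet_cond_closedBall_le_rpow (μ : Measure ℝ) [IsProbabilityMeasure μ]
    {s : ℝ} (hs0 : 0 ≤ s) (hloc : ∀ᵐ x ∂μ, s < locDim μ x) {c : ℝ≥0∞} (hc : c < 1) :
    ∃ A : Set ℝ, ∃ C > (0 : ℝ), MeasurableSet A ∧ c < μ A ∧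
      ∀ x ∈ A, ∀ r ∈ Ioc (0 : ℝ) 1, μ[closedBall x r | A] ≤ ENNReal.ofReal (C * r ^ s) := by
  obtain ⟨n, hcn, hn1⟩ := ((eventually_lt_measure_of_ae_exists_mem
    (ballGrowthSet_mono μ s) (ae_exists_mem_ballGrowthSet μ hs0 hloc)
    (hc.trans_eq measure_univ.symm)).and (eventually_ge_atTop 1)).exists
  set A := ballGrowthSet μ s n
  have hA : MeasurableSet A := measurableSet_ballGrowthSet μ s n
  have hμA : 0 < (μ A).toReal :=
    ENNReal.toReal_pos (hcn.trans_le' bot_le).ne' (measure_ne_top μ A)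
  have hC : 0 < (μ A).toReal⁻¹ * (2 ^ s * n) :=
    mul_pos (inv_pos.2 hμA) (mul_pos (by positivity) (by exact_mod_cast hn1))
  refine ⟨A, _, hC, hA, hcn, fun x hx r hr => ?_⟩
  calc μ[closedBall x r | A] ≤ (μ A)⁻¹ * μ (closedBall x r) := by
        rw [cond_apply hA]
        gcongr
        exact inter_subset_right
    _ ≤ ENNReal.ofReal (μ A).toReal⁻¹ * ENNReal.ofReal (2 ^ s * n * r ^ s) := by
        rw [ENNReal.ofReal_inv_of_pos hμA, ENNReal.ofReal_toReal (measure_ne_top μ A)]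
        gcongr
        exact measure_closedBall_le_of_mem_ballGrowthSet hs0 hx hr
    _ = ENNReal.ofReal ((μ A).toReal⁻¹ * (2 ^ s * n) * r ^ s) := by
        rw [← ENNReal.ofReal_mul (by positivity)]
        ring_nf

section Energy

variable {X : Type*} [MetricSpace X] {x : X} {C s t : ℝ}

/-- A point at distance `d ∈ (2⁻ᵏ⁻¹, 2⁻ᵏ]` from `x` is charged to the `k`-th dyadic ball. -/
lemma edist_rpow_neg_le_tsum (ht : 0 ≤ t) {y : X} (hy : y ≠ x) :
    edist x y ^ (-t) ≤ 1 + ∑' k : ℕ,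
      (closedBall x ((2 : ℝ) ^ k)⁻¹).indicator (fun _ => (2 ^ (k + 1) : ℝ≥0∞) ^ t) y := by
  have hd : 0 < dist x y := dist_pos.2 hy.symm
  rw [ENNReal.rpow_neg, ← ENNReal.inv_rpow, edist_dist, ← ENNReal.ofReal_inv_of_pos hd]
  rcases le_or_gt 1 (dist x y) with h1 | h1
  · calc ENNReal.ofReal (dist x y)⁻¹ ^ t ≤ 1 ^ t := by
          gcongr
          exact ENNReal.ofReal_le_one.2 (inv_le_one_of_one_le₀ h1)
      _ ≤ _ := by rw [ENNReal.one_rpow]; exact le_self_add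
  · obtain ⟨k, hk, hk1⟩ := exists_nat_pow_near (one_le_inv₀ hd |>.2 h1.le) one_lt_two
    have hyk : y ∈ closedBall x ((2 : ℝ) ^ k)⁻¹ := by
      rw [mem_closedBall, dist_comm]
      exact (le_inv_comm₀ (by positivity) hd).1 hk
    calc ENNReal.ofReal (dist x y)⁻¹ ^ t ≤ (2 ^ (k + 1) : ℝ≥0∞) ^ t := by
          gcongr
          rw [← ENNReal.ofReal_ofNat, ← ENNReal.ofReal_pow zero_le_two]
          exact ENNReal.ofReal_le_ofReal hk1.le
      _ = (closedBall x ((2 : ℝ) ^ k)⁻¹).indicator (fun _ => (2 ^ (k + 1) : ℝ≥0∞) ^ t) y :=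
          (indicator_of_mem hyk (fun _ => (2 ^ (k + 1) : ℝ≥0∞) ^ t)).symm
      _ ≤ ∑' k : ℕ, (closedBall x ((2 : ℝ) ^ k)⁻¹).indicator
            (fun _ => (2 ^ (k + 1) : ℝ≥0∞) ^ t) y := ENNReal.le_tsum k
      _ ≤ _ := le_add_self

lemma two_pow_succ_rpow_mul_ofReal_eq (C s t : ℝ) (k : ℕ) :
    (2 ^ (k + 1) : ℝ≥0∞) ^ t * ENNReal.ofReal (C * ((2 : ℝ) ^ k)⁻¹ ^ s)
      = ENNReal.ofReal C * 2 ^ t * (2 ^ (t - s)) ^ k := by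
  simp only [← ENNReal.ofReal_ofNat 2, ← ENNReal.ofReal_pow zero_le_two,
    ENNReal.ofReal_rpow_of_pos two_pos, ENNReal.ofReal_rpow_of_pos (pow_pos two_pos _)]
  rw [← ENNReal.ofReal_pow (by positivity),
    ← ENNReal.ofReal_mul' (by positivity : (0 : ℝ) ≤ 2 ^ t),
    ← ENNReal.ofReal_mul' (by positivity : (0 : ℝ) ≤ (2 ^ (t - s)) ^ k),
    ← ENNReal.ofReal_mul (by positivity)]
  congr 1
  simp only [← Real.rpow_natCast, ← Real.rpow_mul zero_le_two, ← Real.rpow_neg zero_le_two]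
  rw [mul_left_comm, ← Real.rpow_add two_pos, mul_assoc, ← Real.rpow_add two_pos]
  congr 2
  push_cast
  ring

variable [MeasurableSpace X] {ν : Measure X}

lemma measure_singleton_eq_zero_of_closedBall_le (hs : 0 < s)
    (hball : ∀ r ∈ Ioc (0 : ℝ) 1, ν (closedBall x r) ≤ ENNReal.ofReal (C * r ^ s)) :
    ν {x} = 0 := by
  have hlim : Tendsto (fun r : ℝ => ENNReal.ofReal (C * r ^ s)) (𝓝[>] 0) (𝓝 0) := by
    have : ContinuousAt (fun r : ℝ => ENNReal.ofReal (C * r ^ s)) 0 :=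
      ENNReal.continuous_ofReal.continuousAt.comp
        (continuousAt_const.mul (Real.continuousAt_rpow_const 0 s (Or.inr hs.le)))
    simpa [Real.zero_rpow hs.ne'] using this.tendsto.mono_left nhdsWithin_le_nhds
  refine le_antisymm (ge_of_tendsto hlim ?_) bot_le
  filter_upwards [Ioc_mem_nhdsGT zero_lt_one] with r hr
  exact (measure_mono (singleton_subset_iff.2 (mem_closedBall_self hr.1.le))).trans (hball r hr)

variable [OpensMeasurableSpace X]

lemma lintegral_edist_rpow_neg_le (ht : 0 ≤ t) (hts : t < s)
    (hball : ∀ r ∈ Ioc (0 : ℝ) 1, ν (closedBall x r) ≤ ENNReal.ofReal (C * r ^ s)) :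
    ∫⁻ y, edist x y ^ (-t) ∂ν ≤ ν univ + ENNReal.ofReal C * 2 ^ t * (1 - 2 ^ (t - s))⁻¹ := by
  have hx : ∀ᵐ y ∂ν, y ∉ ({x} : Set X) := measure_eq_zero_iff_ae_notMem.1
    (measure_singleton_eq_zero_of_closedBall_le (ht.trans_lt hts) hball)
  have hdyadic : ∀ k : ℕ, (2 ^ (k + 1) : ℝ≥0∞) ^ t * ν (closedBall x ((2 : ℝ) ^ k)⁻¹)
      ≤ ENNReal.ofReal C * 2 ^ t * (2 ^ (t - s)) ^ k := fun k => by
    rw [← two_pow_succ_rpow_mul_ofReal_eq]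
    gcongr
    exact hball _ ⟨by positivity, inv_le_one_of_one_le₀ (one_le_pow₀ one_le_two)⟩
  calc ∫⁻ y, edist x y ^ (-t) ∂ν
      ≤ ∫⁻ y, 1 + ∑' k : ℕ, (closedBall x ((2 : ℝ) ^ k)⁻¹).indicator
          (fun _ => (2 ^ (k + 1) : ℝ≥0∞) ^ t) y ∂ν :=
        lintegral_mono_ae (hx.mono fun y hy => edist_rpow_neg_le_tsum ht hy)
    _ = ν univ + ∑' k : ℕ, (2 ^ (k + 1) : ℝ≥0∞) ^ t * ν (closedBall x ((2 : ℝ) ^ k)⁻¹) := by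
        rw [lintegral_add_left measurable_const, lintegral_one,
          lintegral_tsum fun _ =>
            (measurable_const.indicator measurableSet_closedBall).aemeasurable]
        simp only [lintegral_indicator_const measurableSet_closedBall]
    _ ≤ ν univ + ∑' k : ℕ, ENNReal.ofReal C * 2 ^ t * (2 ^ (t - s)) ^ k :=
        add_le_add_right (ENNReal.tsum_le_tsum hdyadic) _
    _ = ν univ + ENNReal.ofReal C * 2 ^ t * (1 - 2 ^ (t - s))⁻¹ := by
        rw [ENNReal.tsum_mul_left, ENNReal.tsum_geometric]

lemma lintegral_lintegral_edist_rpow_neg_lt_top [IsFiniteMeasure ν] (ht : 0 ≤ t) (hts : t < s)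
    (hball : ∀ᵐ x ∂ν, ∀ r ∈ Ioc (0 : ℝ) 1, ν (closedBall x r) ≤ ENNReal.ofReal (C * r ^ s)) :
    ∫⁻ x, ∫⁻ y, edist x y ^ (-t) ∂ν ∂ν < ∞ := by
  set K := ν univ + ENNReal.ofReal C * 2 ^ t * (1 - 2 ^ (t - s))⁻¹
  have hK : K ≠ ∞ := by
    have hgeom : (2 : ℝ≥0∞) ^ (t - s) < 1 :=
      ENNReal.rpow_lt_one_of_one_lt_of_neg ENNReal.one_lt_two (sub_neg.2 hts)
    have : (1 - 2 ^ (t - s) : ℝ≥0∞)⁻¹ ≠ ∞ :=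
      ENNReal.inv_ne_top.2 (tsub_eq_zero_iff_le.not.2 hgeom.not_ge)
    have : (2 : ℝ≥0∞) ^ t ≠ ∞ := ENNReal.rpow_ne_top_of_nonneg ht ENNReal.ofNat_ne_top
    finiteness
  calc ∫⁻ x, ∫⁻ y, edist x y ^ (-t) ∂ν ∂ν ≤ ∫⁻ _, K ∂ν :=
        lintegral_mono_ae (hball.mono fun x hx => lintegral_edist_rpow_neg_le ht hts hx)
    _ = K * ν univ := lintegral_const K
    _ < ∞ := ENNReal.mul_lt_top hK.lt_top (measure_lt_top ν univ)

end Energy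

theorem stmt3
    (μ : Measure ℝ) [IsProbabilityMeasure μ]
    (hloc : ∀ᵐ x ∂μ, 1 ≤ locDim μ x) :
    ∀ ε : ℝ, 0 < ε → ∃ A : Set ℝ, ∃ C > (0 : ℝ), MeasurableSet A ∧
      ENNReal.ofReal (1 - ε) < μ A ∧
      (∀ x ∈ A, ∀ r : ℝ, r ∈ Set.Ioc (0 : ℝ) 1 →
        ((μ A)⁻¹ • μ.restrict A) (closedBall x r) ≤ ENNReal.ofReal (C * r ^ (1 - ε))) ∧
      (∀ t : ℝ, 0 < t → t < 1 - ε → energyM ((μ A)⁻¹ • μ.restrict A) t < ∞) := by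
  intro ε hε
  have hs : ∀ᵐ x ∂μ, max (1 - ε) 0 < locDim μ x :=
    hloc.mono fun x hx => max_lt (by linarith) (by linarith)
  have hc : ENNReal.ofReal (1 - ε) < 1 := ENNReal.ofReal_lt_one.2 (by linarith)
  obtain ⟨A, C, hC, hA, hμA, hball⟩ :=
    exists_measurableSet_cond_closedBall_le_rpow μ (le_max_right _ _) hs hc
  have hballε : ∀ x ∈ A, ∀ r ∈ Ioc (0 : ℝ) 1,
      ProbabilityTheory.cond μ A (closedBall x r) ≤ ENNReal.ofReal (C * r ^ (1 - ε)) :=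
    fun x hx r hr => (hball x hx r hr).trans <| ENNReal.ofReal_le_ofReal <|
      mul_le_mul_of_nonneg_left
        (Real.rpow_le_rpow_of_exponent_ge hr.1 hr.2 (le_max_left _ _)) hC.le
  have := ProbabilityTheory.cond_isProbabilityMeasure (μ := μ) (hμA.trans_le' bot_le).ne'
  refine ⟨A, C, hC, hA, hμA, hballε, fun t ht htε => ?_⟩
  show energyM (ProbabilityTheory.cond μ A) t < ∞
  exact lintegral_lintegral_edist_rpow_neg_lt_top ht.le htε
    ((ProbabilityTheory.ae_cond_mem hA).mono fun x hx => hballε x hx)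
end

section
/- Let 0 < λ < 1 and suppose θ = 1/λ satisfies: there exist ℓ ∈ ℕ and c > 0 such that for all sufficiently large N and all t ∈ [1, θ], the number of n ∈ {0,…,N−1} with ‖tθⁿ‖ ≥ 1/ℓ (distance to nearest integer) is at least cN. Let μ be the self-similar measure of the IFS (λx + a₁, …, λx + a_m) with distinct translations aᵢ including a₁ = 0 and a₂ = 1, and with strictly positive weights p. Then there exist C, s > 0 such that |μ̂(ξ)| ≤ C|ξ|^{−s} for all ξ ≠ 0. -/
/-!
Self-similarity gives `μ̂(ξ) = Φ(ξ) μ̂(λξ)`, hence `|μ̂(ξ)| ≤ ∏_{k ≤ N} |Φ(λᵏξ)|`, and every factor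
has modulus at most `1`. Because `a` contains the translations `0` and `1` with positive weights,
`|Φ(ζ)| ≤ B < 1` as soon as `‖ζ‖ ≥ 1/ℓ`. For `θᴺ ≤ ξ ≤ θᴺ⁺¹` write `ξ = tθᴺ` with `t ∈ [1, θ]`:
the arguments `λᵏξ = tθᴺ⁻ᵏ` then run through `tθⁿ`, `n ≤ N`, so the combinatorial hypothesis makes
at least `cN` factors small and `|μ̂(ξ)| ≤ B^{cN}`, which is a power of `ξ`.
-/

open MeasureTheory Metric Filter
open scoped ENNReal Real Classical

noncomputable def fourierM (μ : Measure ℝ) (ξ : ℝ) : ℂ :=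
  ∫ x, Complex.exp ((Real.pi * ξ * x : ℝ) * Complex.I) ∂μ

/-- Distance from a real number to the nearest integer. -/
noncomputable def distInt (x : ℝ) : ℝ := |x - round x|

open Finset

lemma prod_le_pow_card_filter {ι : Type*} {s : Finset ι} {g : ι → ℝ} {B : ℝ} (P : ι → Prop)
    (hg0 : ∀ n ∈ s, 0 ≤ g n) (hg1 : ∀ n ∈ s, g n ≤ 1) (hgB : ∀ n ∈ s, P n → g n ≤ B) :
    ∏ n ∈ s, g n ≤ B ^ #(s.filter P) := by
  rw [← prod_filter_mul_prod_filter_not s P]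
  calc (∏ n ∈ s.filter P, g n) * ∏ n ∈ s.filter (¬P ·), g n ≤ ∏ n ∈ s.filter P, g n :=
        mul_le_of_le_one_right (prod_nonneg fun n hn => hg0 n (mem_filter.1 hn).1)
          (prod_le_one (fun n hn => hg0 n (mem_filter.1 hn).1)
            fun n hn => hg1 n (mem_filter.1 hn).1)
    _ ≤ ∏ _n ∈ s.filter P, B :=
        prod_le_prod (fun n hn => hg0 n (mem_filter.1 hn).1)
          fun n hn => hgB n (mem_filter.1 hn).1 (mem_filter.1 hn).2
    _ = B ^ #(s.filter P) := prod_const B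

lemma card_filter_range_le_card_filter_range_succ {lam : ℝ} (hlam : lam ≠ 0) (P : ℝ → Prop)
    (N : ℕ) (ξ : ℝ) :
    #((range N).filter fun n => P (lam ^ N * ξ * lam⁻¹ ^ n)) ≤
      #((range (N + 1)).filter fun k => P (lam ^ k * ξ)) := by
  refine card_le_card_of_injOn (N - ·) (fun n hn => ?_) fun n₁ hn₁ n₂ hn₂ h => ?_
  · simp only [coe_filter, mem_range, Set.mem_ofPred_eq] at hn ⊢
    refine ⟨by omega, ?_⟩
    rw [pow_sub₀ _ hlam hn.1.le, ← inv_pow, mul_right_comm]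
    exact hn.2
  · simp only [coe_filter, mem_range, Set.mem_ofPred_eq] at hn₁ hn₂
    simp only at h
    omega

lemma exists_rpow_decay_of_geometric_decay {f : ℝ → ℝ} {θ B c : ℝ} (hθ : 1 < θ) (hB0 : 0 < B)
    (hB1 : B < 1) (hc : 0 < c) (M : ℕ) (hf1 : ∀ ξ, f ξ ≤ 1)
    (hgeom : ∀ N ≥ M, ∀ ξ ∈ Set.Icc (θ ^ N) (θ ^ (N + 1)), f ξ ≤ B ^ (c * N)) :
    ∃ C > (0 : ℝ), ∃ s > (0 : ℝ), ∀ ξ > 0, f ξ ≤ C * ξ ^ (-s) := by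
  have hlogθ : 0 < Real.log θ := Real.log_pos hθ
  set s := -(c * Real.log B) / Real.log θ
  have hs : 0 < s := div_pos (by nlinarith [Real.log_neg hB0 hB1]) hlogθ
  -- `s` is chosen so that the geometric scales `θ ^ n` turn into the decay rate `B ^ c`.
  have hscale (n : ℕ) : (θ ^ n) ^ (-s) = B ^ (c * n) := by
    rw [Real.rpow_def_of_pos (by positivity), Real.rpow_def_of_pos hB0, Real.log_pow]
    congr 1
    simp only [s]
    field_simp
  have hC : 0 < B ^ (-c) + (θ ^ M) ^ s := by positivity
  refine ⟨_, hC, s, hs, fun ξ hξ => ?_⟩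
  rcases lt_or_ge ξ (θ ^ M) with hsmall | hlarge
  · calc f ξ ≤ (θ ^ M) ^ s * (θ ^ M) ^ (-s) := by
          rw [← Real.rpow_add (by positivity), add_neg_cancel, Real.rpow_zero]; exact hf1 ξ
      _ ≤ (θ ^ M) ^ s * ξ ^ (-s) :=
          mul_le_mul_of_nonneg_left
            (Real.rpow_le_rpow_of_nonpos hξ hsmall.le (neg_nonpos.2 hs.le)) (by positivity)
      _ ≤ _ := by gcongr; exact le_add_of_nonneg_left (by positivity)
  · obtain ⟨N, hN, hN'⟩ := exists_nat_pow_near (one_le_pow₀ hθ.le |>.trans hlarge) hθ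
    have hMN : M ≤ N := Nat.lt_succ_iff.1 <| (pow_lt_pow_iff_right₀ hθ).1 (hlarge.trans_lt hN')
    calc f ξ ≤ B ^ (c * N) := hgeom N hMN ξ ⟨hN, hN'.le⟩
      _ = B ^ (-c) * (θ ^ (N + 1)) ^ (-s) := by
          rw [hscale, ← Real.rpow_add hB0]; push_cast; ring_nf
      _ ≤ B ^ (-c) * ξ ^ (-s) :=
          mul_le_mul_of_nonneg_left
            (Real.rpow_le_rpow_of_nonpos hξ hN'.le (neg_nonpos.2 hs.le)) (by positivity)
      _ ≤ _ := by gcongr; exact le_add_of_nonneg_right (by positivity)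

lemma pow_mul_mem_Icc_one_inv {lam ξ : ℝ} (hlam : 0 < lam) {N : ℕ}
    (hξ : ξ ∈ Set.Icc (lam⁻¹ ^ N) (lam⁻¹ ^ (N + 1))) : lam ^ N * ξ ∈ Set.Icc 1 lam⁻¹ := by
  have hpow : lam ^ N * lam⁻¹ ^ N = 1 := by rw [← mul_pow, mul_inv_cancel₀ hlam.ne', one_pow]
  constructor
  · calc (1 : ℝ) = lam ^ N * lam⁻¹ ^ N := hpow.symm
      _ ≤ lam ^ N * ξ := by gcongr; exact hξ.1
  · calc lam ^ N * ξ ≤ lam ^ N * lam⁻¹ ^ (N + 1) := by gcongr; exact hξ.2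
      _ = lam⁻¹ := by rw [pow_succ, ← mul_assoc, hpow, one_mul]

lemma distInt_le_half (ζ : ℝ) : distInt ζ ≤ 1 / 2 := abs_sub_round ζ

lemma cos_pi_mul_le_cos_pi_mul_distInt (ζ : ℝ) :
    Real.cos (π * ζ) ≤ Real.cos (π * distInt ζ) := by
  have hr : |ζ - round ζ| ≤ 1 / 2 := abs_sub_round ζ
  have hcos : Real.cos (π * ζ) = (-1) ^ round ζ * Real.cos (π * (ζ - round ζ)) := by
    rw [← Real.cos_add_int_mul_pi]; ring_nf
  have hnonneg : 0 ≤ Real.cos (π * (ζ - round ζ)) :=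
    Real.cos_nonneg_of_mem_Icc ⟨by nlinarith [abs_le.1 hr, Real.pi_pos],
      by nlinarith [abs_le.1 hr, Real.pi_pos]⟩
  calc Real.cos (π * ζ) ≤ |Real.cos (π * ζ)| := le_abs_self _
    _ = Real.cos (π * distInt ζ) := by
      rw [hcos, abs_mul, abs_zpow, abs_neg, abs_one, one_zpow, one_mul, abs_of_nonneg hnonneg,
        distInt, ← Real.cos_abs, abs_mul, abs_of_pos Real.pi_pos]

lemma cos_pi_mul_le_of_le_distInt {δ ζ : ℝ} (hδ : 0 ≤ δ) (h : δ ≤ distInt ζ) :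
    Real.cos (π * ζ) ≤ Real.cos (π * δ) :=
  (cos_pi_mul_le_cos_pi_mul_distInt ζ).trans <| Real.cos_le_cos_of_nonneg_of_le_pi
    (by positivity) (by nlinarith [distInt_le_half ζ, Real.pi_pos])
    (mul_le_mul_of_nonneg_left h Real.pi_pos.le)

lemma norm_add_mul_exp_sq (u v θ : ℝ) :
    ‖(u : ℂ) + v * Complex.exp (θ * Complex.I)‖ ^ 2 = u ^ 2 + v ^ 2 + 2 * u * v * Real.cos θ := by
  rw [Complex.sq_norm, Complex.normSq_apply]
  simp only [Complex.add_re, Complex.ofReal_re, Complex.mul_re, Complex.exp_ofReal_mul_I_re,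
    Complex.ofReal_im, Complex.exp_ofReal_mul_I_im, zero_mul, sub_zero, Complex.add_im,
    Complex.mul_im, add_zero, zero_add]
  linear_combination v ^ 2 * Real.sin_sq_add_cos_sq θ

lemma integrable_exp_pi_mul_I (ν : Measure ℝ) [IsFiniteMeasure ν] (ξ : ℝ) :
    Integrable (fun x => Complex.exp ((π * ξ * x : ℝ) * Complex.I)) ν :=
  (integrable_const (1 : ℝ)).mono' (by fun_prop) (.of_forall fun x => by simp [Complex.norm_exp])

lemma norm_fourierM_le_one (μ : Measure ℝ) [IsProbabilityMeasure μ] (ξ : ℝ) :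
    ‖fourierM μ ξ‖ ≤ 1 := by
  simpa [fourierM] using norm_integral_le_of_norm_le_const (μ := μ) (C := 1)
    (.of_forall fun x => (by simp [Complex.norm_exp] :
      ‖Complex.exp ((π * ξ * x : ℝ) * Complex.I)‖ ≤ 1))

lemma fourierM_neg (μ : Measure ℝ) (ξ : ℝ) :
    fourierM μ (-ξ) = starRingEnd ℂ (fourierM μ ξ) := by
  rw [fourierM, fourierM, ← integral_conj]
  congr 1 with x
  rw [← Complex.exp_conj]
  simp only [map_mul, Complex.conj_ofReal, Complex.conj_I]
  push_cast
  ring_nf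

lemma norm_fourierM_abs (μ : Measure ℝ) (ξ : ℝ) : ‖fourierM μ |ξ|‖ = ‖fourierM μ ξ‖ := by
  rcases abs_choice ξ with h | h <;> simp [h, fourierM_neg]

section Phi

variable {ι : Type*} [Fintype ι]

/-- The factor `Φ` of the product formula `μ̂(ξ) = ∏ₙ Φ(λⁿξ)`. -/
noncomputable def phi (a p : ι → ℝ) (ζ : ℝ) : ℂ :=
  ∑ i, (p i : ℂ) * Complex.exp ((π * ζ * a i : ℝ) * Complex.I)

lemma fourierM_eq_phi_mul {lam : ℝ} {a p : ι → ℝ} (hp : ∀ i, 0 ≤ p i)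
    {μ : Measure ℝ} [IsProbabilityMeasure μ]
    (hss : μ = ∑ i, ENNReal.ofReal (p i) • Measure.map (fun x => lam * x + a i) μ) (ξ : ℝ) :
    fourierM μ ξ = phi a p ξ * fourierM μ (lam * ξ) := by
  have hmeas : ∀ i, Measurable fun x : ℝ => lam * x + a i := fun i => by fun_prop
  have hprob i : IsProbabilityMeasure (μ.map fun x => lam * x + a i) :=
    Measure.isProbabilityMeasure_map (hmeas i).aemeasurable
  have hexp i x : Complex.exp ((π * ξ * (lam * x + a i) : ℝ) * Complex.I)
      = Complex.exp ((π * ξ * a i : ℝ) * Complex.I) *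
        Complex.exp ((π * (lam * ξ) * x : ℝ) * Complex.I) := by
    rw [← Complex.exp_add]; push_cast; ring_nf
  rw [fourierM]
  nth_rewrite 1 [hss]
  rw [integral_finsetSum_measure fun i _ =>
    (integrable_exp_pi_mul_I _ ξ).smul_measure ENNReal.ofReal_ne_top, phi, sum_mul]
  refine sum_congr rfl fun i _ => ?_
  rw [integral_smul_measure, integral_map (hmeas i).aemeasurable
    (integrable_exp_pi_mul_I _ ξ).aestronglyMeasurable]
  simp_rw [hexp, integral_const_mul, ENNReal.toReal_ofReal (hp i), Complex.real_smul, fourierM]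
  ring

lemma norm_phi_le_one {a p : ι → ℝ} (hp : ∀ i, 0 ≤ p i) (hpsum : ∑ i, p i = 1) (ζ : ℝ) :
    ‖phi a p ζ‖ ≤ 1 :=
  calc ‖phi a p ζ‖ ≤ ∑ i, ‖(p i : ℂ) * Complex.exp ((π * ζ * a i : ℝ) * Complex.I)‖ :=
        norm_sum_le _ _
    _ = 1 := by simp [Complex.norm_exp, abs_of_nonneg (hp _), hpsum]

lemma norm_fourierM_le_prod_norm_phi {lam : ℝ} {a p : ι → ℝ} (hp : ∀ i, 0 ≤ p i)
    {μ : Measure ℝ} [IsProbabilityMeasure μ]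
    (hss : μ = ∑ i, ENNReal.ofReal (p i) • Measure.map (fun x => lam * x + a i) μ) (N : ℕ)
    (ξ : ℝ) : ‖fourierM μ ξ‖ ≤ ∏ k ∈ range N, ‖phi a p (lam ^ k * ξ)‖ := by
  induction N generalizing ξ with
  | zero => simpa using norm_fourierM_le_one μ ξ
  | succ N ih =>
    rw [fourierM_eq_phi_mul hp hss, norm_mul, prod_range_succ', pow_zero, one_mul, mul_comm]
    simp_rw [pow_succ, mul_assoc]
    exact mul_le_mul_of_nonneg_right (ih _) (norm_nonneg _)

lemma norm_phi_le_norm_pair_add {a p : ι → ℝ} (hp : ∀ i, 0 ≤ p i) (hpsum : ∑ i, p i = 1)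
    {i j : ι} (hij : i ≠ j) (ζ : ℝ) :
    ‖phi a p ζ‖ ≤ ‖(p i : ℂ) * Complex.exp ((π * ζ * a i : ℝ) * Complex.I)
      + p j * Complex.exp ((π * ζ * a j : ℝ) * Complex.I)‖ + (1 - p i - p j) := by
  set f : ι → ℂ := fun k => (p k : ℂ) * Complex.exp ((π * ζ * a k : ℝ) * Complex.I)
  have hnorm k : ‖f k‖ = p k := by simp [f, Complex.norm_exp, abs_of_nonneg (hp k)]
  have hrest : ∑ k ∈ {i, j}ᶜ, p k = 1 - p i - p j := by
    rw [← hpsum, ← sum_add_sum_compl {i, j} p, sum_pair hij]; ring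
  calc ‖phi a p ζ‖ = ‖(f i + f j) + ∑ k ∈ {i, j}ᶜ, f k‖ := by
        rw [phi, ← sum_pair hij, sum_add_sum_compl]
    _ ≤ ‖f i + f j‖ + ∑ k ∈ {i, j}ᶜ, ‖f k‖ :=
        (norm_add_le _ _).trans (by gcongr; exact norm_sum_le _ _)
    _ = _ := by simp only [hnorm, hrest, f]

lemma exists_norm_phi_le_of_le_distInt {a p : ι → ℝ} (hp : ∀ i, 0 ≤ p i)
    (hpsum : ∑ i, p i = 1) {i j : ι} (hi : 0 < p i) (hj : 0 < p j) (hai : a i = 0)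
    (haj : a j = 1) {δ : ℝ} (hδ : 0 < δ) :
    ∃ B, 0 < B ∧ B < 1 ∧ ∀ ζ, δ ≤ distInt ζ → ‖phi a p ζ‖ ≤ B := by
  have hij : i ≠ j := fun h => by simp [h, haj] at hai
  -- Since `distInt ≤ 1 / 2`, capping `δ` at `1 / 2` loses nothing and makes `cos (π δ) < 1`.
  set κ := Real.cos (π * min δ (1 / 2))
  have hκ : κ < 1 := by
    simpa using Real.cos_lt_cos_of_nonneg_of_le_pi le_rfl
      (by nlinarith [min_le_right δ (1 / 2), Real.pi_pos]) (by positivity)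
  set r := √(p i ^ 2 + p j ^ 2 + 2 * p i * p j * κ)
  have hr : r < p i + p j := (Real.sqrt_lt' (by positivity)).2 (by nlinarith [mul_pos hi hj])
  -- `|p i + p j e^{iπζ}| ≤ r < p i + p j`; the `max` only keeps `B` positive.
  refine ⟨max (1 - p i - p j + r) (1 / 2), by positivity, max_lt (by linarith) (by norm_num),
    fun ζ hζ => le_max_of_le_left ?_⟩
  have hcos : Real.cos (π * ζ) ≤ κ :=
    cos_pi_mul_le_of_le_distInt (by positivity) ((min_le_left _ _).trans hζ)
  have hpair : ‖(p i : ℂ) + p j * Complex.exp ((π * ζ : ℝ) * Complex.I)‖ ≤ r := by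
    refine Real.le_sqrt_of_sq_le ?_
    rw [norm_add_mul_exp_sq]
    nlinarith [mul_pos hi hj]
  have := norm_phi_le_norm_pair_add (a := a) hp hpsum hij ζ
  simp only [hai, haj, mul_zero, mul_one, Complex.ofReal_zero, zero_mul, Complex.exp_zero] at this
  linarith

lemma norm_fourierM_le_pow_card_filter {lam : ℝ} {a p : ι → ℝ} (hp : ∀ i, 0 ≤ p i)
    (hpsum : ∑ i, p i = 1) {μ : Measure ℝ} [IsProbabilityMeasure μ]
    (hss : μ = ∑ i, ENNReal.ofReal (p i) • Measure.map (fun x => lam * x + a i) μ) {δ B : ℝ}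
    (hB : ∀ ζ, δ ≤ distInt ζ → ‖phi a p ζ‖ ≤ B) (N : ℕ) (ξ : ℝ) :
    ‖fourierM μ ξ‖ ≤ B ^ #((range N).filter fun k => δ ≤ distInt (lam ^ k * ξ)) :=
  (norm_fourierM_le_prod_norm_phi hp hss N ξ).trans <|
    prod_le_pow_card_filter _ (fun _ _ => norm_nonneg _)
      (fun _ _ => norm_phi_le_one hp hpsum _) fun _ _ => hB _

end Phi

theorem stmt7
    (lam : ℝ) (hlam0 : 0 < lam) (hlam1 : lam < 1)
    (hcomb : ∃ ℓ : ℕ, 0 < ℓ ∧ ∃ c > (0 : ℝ), ∃ N₀ : ℕ, ∀ N ≥ N₀,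
      ∀ t ∈ Set.Icc (1 : ℝ) lam⁻¹,
        c * N ≤ ((Finset.range N).filter
          (fun n => (1 : ℝ) / ℓ ≤ distInt (t * lam⁻¹ ^ n))).card)
    (m : ℕ) (hm : 2 ≤ m) (a : Fin m → ℝ)
    (ha0 : a ⟨0, by omega⟩ = 0) (ha1 : a ⟨1, by omega⟩ = 1)
    (p : Fin m → ℝ) (hp : ∀ i, 0 < p i) (hpsum : ∑ i, p i = 1)
    (μ : Measure ℝ) [IsProbabilityMeasure μ]
    (hss : μ = ∑ i : Fin m,
      ENNReal.ofReal (p i) • Measure.map (fun x => lam * x + a i) μ) :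
    ∃ C > (0 : ℝ), ∃ s > (0 : ℝ), ∀ ξ : ℝ, ξ ≠ 0 →
      ‖fourierM μ ξ‖ ≤ C * |ξ| ^ (-s) := by
  obtain ⟨ℓ, hℓ, c, hc, N₀, hcount⟩ := hcomb
  have hp' i := (hp i).le
  obtain ⟨B, hB0, hB1, hB⟩ := exists_norm_phi_le_of_le_distInt hp' hpsum (hp _) (hp _) ha0 ha1
    (one_div_pos.2 (Nat.cast_pos.2 hℓ))
  have hgeom : ∀ N ≥ N₀, ∀ ξ ∈ Set.Icc (lam⁻¹ ^ N) (lam⁻¹ ^ (N + 1)),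
      ‖fourierM μ ξ‖ ≤ B ^ (c * N) := by
    intro N hN ξ hξ
    calc ‖fourierM μ ξ‖
        ≤ B ^ #((range (N + 1)).filter fun k => 1 / (ℓ : ℝ) ≤ distInt (lam ^ k * ξ)) :=
          norm_fourierM_le_pow_card_filter hp' hpsum hss hB (N + 1) ξ
      _ ≤ B ^ #((range N).filter fun n => 1 / (ℓ : ℝ) ≤ distInt (lam ^ N * ξ * lam⁻¹ ^ n)) :=
          pow_le_pow_of_le_one hB0.le hB1.le <|
            card_filter_range_le_card_filter_range_succ hlam0.ne' (1 / (ℓ : ℝ) ≤ distInt ·) N ξ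
      _ ≤ B ^ (c * N) := by
          rw [← Real.rpow_natCast]
          exact Real.rpow_le_rpow_of_exponent_ge hB0 hB1.le (hcount N hN _ (pow_mul_mem_Icc_one_inv hlam0 hξ))
  obtain ⟨C, hC, s, hs, hdecay⟩ := exists_rpow_decay_of_geometric_decay
    ((one_lt_inv₀ hlam0).2 hlam1) hB0 hB1 hc N₀ (norm_fourierM_le_one μ) hgeom
  refine ⟨C, hC, s, hs, fun ξ hξ => ?_⟩
  rw [← norm_fourierM_abs]
  exact hdecay |ξ| (abs_pos.2 hξ)
end
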